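/- There exists a Markov chain (X_n) on Ω = [0,∞) with continuous transition kernel x ↦ μ_x, together with f = id, such that sup_x E_x[|f(X₁)−f(x)|] ≤ 1 and E_x[f(X₁)−f(x)] = −1 for all x > 1, yet for some starting point x₀ and every R > 0 there exists n with P_{x₀}(X_n > R) ≥ 1/2. In particular, conditions (D) and (M₀) (negative drift and increments uniformly bounded in L¹) do not imply non-escape of mass. -/

import Mathlib

open MeasureTheory Set Filter
open scoped ENNReal NNReal

/-!
The chain lives on the base points `x_t = 1/4 + 2^{-(t+2)}`, which accumulate at `1/4`, and on
heights above `1`, from which it moves down deterministically by `1`. Time is cut into blocks of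
lengths `1, 2, 3, …`. At time `t`, in block `k` with `D` steps left, the chain at `x_t` moves on to
`x_{t+1}`, except that with probability `1/k` it jumps to `x_{t+D} + D - 1`. Everything that jumped
during a block therefore sits on one point, which comes down one unit per step and lands on the
next base point exactly when the block ends, so the chain started at `x_0` is always carried by two
points. After `3D` steps of block `4D` the escaped mass is `1 - (1 - 1/(4D))^{3D} ≥ 1 - e^{-3/4}
≥ 1/2`, and it sits above `D`. A jump from `x_t` has probability `1/k` and length about
`D - 1 ≤ k - 1`, so it adds at most `(k - 1)/k` to the mean absolute increment, leaving room for
the small moves between base points.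

For weak continuity the jump probability is spread as a bump around each base point in the
logarithmic coordinate `level`; the bumps vanish where the jump target changes, and their heights
`1/k` tend to `0` at the accumulation point `1/4`.
-/

/-- The `n`-step distributions of the Markov chain with transition kernel `μk`
started at `x`. -/
noncomputable def iterKernel (μk : ℝ≥0 → Measure ℝ≥0) (x : ℝ≥0) : ℕ → Measure ℝ≥0
  | 0 => Measure.dirac x
  | n + 1 => (iterKernel μk x n).bind μk

namespace EscapeOfMass

open Topology

noncomputable section

section TwoPoint

variable {α β : Type*} [MeasurableSpace α] [MeasurableSpace β]

def twoPoint (p : ℝ) (u v : α) : Measure α :=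
  ENNReal.ofReal (1 - p) • Measure.dirac u + ENNReal.ofReal p • Measure.dirac v

@[simp]
lemma twoPoint_zero (u v : α) : twoPoint 0 u v = Measure.dirac u := by
  simp [twoPoint]

lemma twoPoint_self {p : ℝ} (hp₀ : 0 ≤ p) (hp₁ : p ≤ 1) (u : α) :
    twoPoint p u u = Measure.dirac u := by
  rw [twoPoint, ← add_smul, ← ENNReal.ofReal_add (by linarith) hp₀, sub_add_cancel,
    ENNReal.ofReal_one, one_smul]

lemma isProbabilityMeasure_twoPoint {p : ℝ} (hp₀ : 0 ≤ p) (hp₁ : p ≤ 1) (u v : α) :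
    IsProbabilityMeasure (twoPoint p u v) := by
  constructor
  simp only [twoPoint, Measure.add_apply, Measure.smul_apply, measure_univ, smul_eq_mul, mul_one]
  rw [← ENNReal.ofReal_add (by linarith) hp₀, sub_add_cancel, ENNReal.ofReal_one]

lemma ofReal_le_twoPoint_apply (p : ℝ) (u : α) {v : α} {s : Set α} (hv : v ∈ s) :
    ENNReal.ofReal p ≤ twoPoint p u v s := by
  simp [twoPoint, Measure.dirac_apply_of_mem hv]

variable [MeasurableSingletonClass α]

lemma lintegral_twoPoint (f : α → ℝ≥0∞) (p : ℝ) (u v : α) :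
    ∫⁻ y, f y ∂twoPoint p u v = ENNReal.ofReal (1 - p) * f u + ENNReal.ofReal p * f v := by
  simp [twoPoint, lintegral_add_measure, lintegral_smul_measure]

lemma integral_twoPoint {E : Type*} [NormedAddCommGroup E] [NormedSpace ℝ E] [CompleteSpace E]
    (f : α → E) {p : ℝ} (hp₀ : 0 ≤ p) (hp₁ : p ≤ 1) (u v : α) :
    ∫ y, f y ∂twoPoint p u v = (1 - p) • f u + p • f v := by
  rw [twoPoint, integral_add_measure, integral_smul_measure, integral_smul_measure,
    integral_dirac, integral_dirac, ENNReal.toReal_ofReal (by linarith),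
    ENNReal.toReal_ofReal hp₀]
  all_goals exact (integrable_dirac ENNReal.coe_lt_top).smul_measure ENNReal.ofReal_ne_top

lemma bind_twoPoint (κ : α → Measure β) (p : ℝ) (u v : α) :
    (twoPoint p u v).bind κ = ENNReal.ofReal (1 - p) • κ u + ENNReal.ofReal p • κ v := by
  ext s hs
  have hκ : AEMeasurable κ (twoPoint p u v) :=
    (aemeasurable_dirac.smul_measure _).add_measure (aemeasurable_dirac.smul_measure _)
  rw [Measure.bind_apply hs hκ, lintegral_twoPoint]
  simp

lemma bind_twoPoint_eq_twoPoint {κ : α → Measure β} {p q : ℝ} (hp₀ : 0 ≤ p) (hp₁ : p ≤ 1)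
    (hq₀ : 0 ≤ q) {u v : α} {u' w : β} (hu : κ u = twoPoint q u' w)
    (hv : κ v = Measure.dirac w) :
    (twoPoint p u v).bind κ = twoPoint (1 - (1 - p) * (1 - q)) u' w := by
  have h₁ : 0 ≤ 1 - p := by linarith
  rw [bind_twoPoint, hu, hv, twoPoint, twoPoint, sub_sub_cancel,
    ENNReal.ofReal_mul h₁, show 1 - (1 - p) * (1 - q) = (1 - p) * q + p by ring,
    ENNReal.ofReal_add (mul_nonneg h₁ hq₀) hp₀, ENNReal.ofReal_mul h₁]
  simp only [smul_add, smul_smul, add_smul]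
  abel

lemma continuous_integral_twoPoint {X Y : Type*} [TopologicalSpace X] [TopologicalSpace Y]
    [MeasurableSpace Y] [MeasurableSingletonClass Y] {p : X → ℝ} {u v : X → Y}
    (hp₀ : ∀ x, 0 ≤ p x) (hp₁ : ∀ x, p x ≤ 1) (hp : Continuous p) (hu : Continuous u)
    (hv : ∀ x, p x = 0 ∨ ContinuousAt v x) (g : BoundedContinuousFunction Y ℝ) :
    Continuous fun x => ∫ y, g y ∂twoPoint (p x) (u x) (v x) := by
  have hgu : Continuous fun x => g (u x) := g.continuous.comp hu
  simp_rw [integral_twoPoint _ (hp₀ _) (hp₁ _), smul_eq_mul,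
    show ∀ x, (1 - p x) * g (u x) + p x * g (v x) = g (u x) + p x * (g (v x) - g (u x))
      from fun x => by ring]
  refine hgu.add (continuous_iff_continuousAt.2 fun x₀ => ?_)
  rcases hv x₀ with h₀ | hv₀
  · have hbdd : IsBoundedUnder (· ≤ ·) (𝓝 x₀) fun x => ‖g (v x) - g (u x)‖ :=
      isBoundedUnder_of ⟨2 * ‖g‖, fun x => (norm_sub_le _ _).trans (by
        linarith [g.norm_coe_le_norm (v x), g.norm_coe_le_norm (u x)])⟩
    simpa [ContinuousAt, h₀] using (h₀ ▸ hp.tendsto x₀).zero_mul_isBoundedUnder_le hbdd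
  · exact hp.continuousAt.mul ((g.continuous.continuousAt.comp hv₀).sub hgu.continuousAt)

end TwoPoint

section Bumps

def tent (z : ℝ) : ℝ := max 0 (1 - 4 * |z - round z|)

lemma continuous_abs_sub_round : Continuous fun z : ℝ => |z - round z| := by
  simp_rw [← UnitAddCircle.norm_eq]
  exact continuous_norm.comp (AddCircle.continuous_mk' 1)

lemma continuous_tent : Continuous tent :=
  continuous_const.max (continuous_const.sub (continuous_const.mul continuous_abs_sub_round))

lemma tent_nonneg (z : ℝ) : 0 ≤ tent z := le_max_left _ _

lemma tent_le_one (z : ℝ) : tent z ≤ 1 :=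
  max_le zero_le_one (by linarith [abs_nonneg (z - round z)])

@[simp]
lemma tent_intCast (n : ℤ) : tent n = 1 := by simp [tent]

lemma round_eventually_eq_of_tent_ne_zero {z₀ : ℝ} (h : tent z₀ ≠ 0) :
    ∀ᶠ z in 𝓝 z₀, round z = round z₀ := by
  have hz₀ : |z₀ - round z₀| < 1 / 4 := by
    by_contra! hge
    exact h (max_eq_left (by linarith))
  filter_upwards [Metric.ball_mem_nhds z₀ (by norm_num : (0 : ℝ) < 1 / 4)] with z hz
  rw [Metric.mem_ball, Real.dist_eq] at hz
  rw [round_eq_iff]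
  constructor <;> linarith [abs_lt.1 hz, abs_lt.1 hz₀]

def bumps (c : ℤ → ℝ) (z : ℝ) : ℝ := c (round z) * tent z

variable {c : ℤ → ℝ}

@[simp]
lemma bumps_intCast (n : ℤ) : bumps c n = c n := by simp [bumps]

lemma bumps_nonneg (hc : ∀ n, 0 ≤ c n) (z : ℝ) : 0 ≤ bumps c z :=
  mul_nonneg (hc _) (tent_nonneg z)

lemma bumps_le (hc : ∀ n, 0 ≤ c n) (z : ℝ) : bumps c z ≤ c (round z) :=
  mul_le_of_le_one_right (hc _) (tent_le_one z)

lemma bumps_eq_zero_of_tent_eq_zero {z : ℝ} (h : tent z = 0) : bumps c z = 0 := by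
  simp [bumps, h]

lemma abs_bumps_le (z : ℝ) : |bumps c z| ≤ |c (round z)| := by
  rw [bumps, abs_mul, abs_of_nonneg (tent_nonneg z)]
  exact mul_le_of_le_one_right (abs_nonneg _) (tent_le_one z)

lemma continuous_bumps {B : ℝ} (hc : ∀ n, |c n| ≤ B) : Continuous (bumps c) := by
  refine continuous_iff_continuousAt.2 fun z₀ => ?_
  by_cases h : tent z₀ = 0
  · have hB : Tendsto (fun z => B * tent z) (𝓝 z₀) (𝓝 0) := by
      simpa [h] using (continuous_tent.tendsto z₀).const_mul B
    rw [ContinuousAt, bumps_eq_zero_of_tent_eq_zero h]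
    refine squeeze_zero_norm (fun z => ?_) hB
    rw [Real.norm_eq_abs, bumps, abs_mul, abs_of_nonneg (tent_nonneg z)]
    exact mul_le_mul_of_nonneg_right (hc _) (tent_nonneg z)
  · refine ((continuous_tent.const_mul (c (round z₀))).continuousAt).congr ?_
    filter_upwards [round_eventually_eq_of_tent_ne_zero h] with z hz
    rw [bumps, hz]

lemma tendsto_bumps_atTop (hc : Tendsto c atTop (𝓝 0)) : Tendsto (bumps c) atTop (𝓝 0) := by
  have hround : Tendsto (fun z : ℝ => round z) atTop atTop := by
    simp_rw [round_eq]
    exact tendsto_floor_atTop.comp (tendsto_atTop_add_const_right _ _ tendsto_id)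
  refine squeeze_zero_norm (fun z => abs_bumps_le z) ?_
  simpa using (hc.comp hround).norm

end Bumps

section Schedule

/-- At time `t` the chain is at position `(schedule t).2` of block number `(schedule t).1`; block
`k` lasts `k` steps. -/
def schedule : ℕ → ℕ × ℕ
  | 0 => (1, 0)
  | t + 1 =>
    if (schedule t).2 + 1 < (schedule t).1 then ((schedule t).1, (schedule t).2 + 1)
    else ((schedule t).1 + 1, 0)

def block (t : ℕ) : ℕ := (schedule t).1

def position (t : ℕ) : ℕ := (schedule t).2

def remaining (t : ℕ) : ℕ := block t - position t

lemma schedule_succ_of_lt {t : ℕ} (h : position t + 1 < block t) :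
    schedule (t + 1) = (block t, position t + 1) := by
  simp only [schedule, block, position] at h ⊢
  rw [if_pos h]

lemma schedule_succ_of_not_lt {t : ℕ} (h : ¬ position t + 1 < block t) :
    schedule (t + 1) = (block t + 1, 0) := by
  simp only [schedule, block, position] at h ⊢
  rw [if_neg h]

lemma position_lt_block (t : ℕ) : position t < block t := by
  induction t with
  | zero => simp [position, block, schedule]
  | succ t ih =>
    by_cases h : position t + 1 < block t
    · simpa [position, block, schedule_succ_of_lt h] using h
    · simp [position, block, schedule_succ_of_not_lt h]

lemma one_le_block (t : ℕ) : 1 ≤ block t := Nat.one_le_of_lt (position_lt_block t)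

lemma one_le_remaining (t : ℕ) : 1 ≤ remaining t := by
  have := position_lt_block t
  unfold remaining
  omega

lemma remaining_le_block (t : ℕ) : remaining t ≤ block t := Nat.sub_le _ _

lemma block_le_succ (t : ℕ) : block t ≤ t + 1 := by
  induction t with
  | zero => simp [block, schedule]
  | succ t ih =>
    by_cases h : position t + 1 < block t
    · simp only [block, schedule_succ_of_lt h] at ih ⊢; omega
    · simp only [block, schedule_succ_of_not_lt h] at ih ⊢; omega

lemma block_le_block_succ (t : ℕ) : block t ≤ block (t + 1) := by
  by_cases h : position t + 1 < block t
  · simp [block, schedule_succ_of_lt h]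
  · simp [block, schedule_succ_of_not_lt h]

lemma schedule_add_of_block_start {t₀ k : ℕ} (h : schedule t₀ = (k, 0)) {s : ℕ} (hs : s < k) :
    schedule (t₀ + s) = (k, s) := by
  induction s with
  | zero => exact h
  | succ s ih =>
    have hprev := ih (by omega)
    have hlt : position (t₀ + s) + 1 < block (t₀ + s) := by
      simp only [position, block, hprev]; omega
    rw [← add_assoc, schedule_succ_of_lt hlt]
    simp [position, block, hprev]

lemma exists_schedule_eq {k s : ℕ} (hs : s < k) : ∃ t, schedule t = (k, s) := by
  suffices ∀ k, 1 ≤ k → ∃ t, schedule t = (k, 0) by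
    obtain ⟨t₀, ht₀⟩ := this k (by omega)
    exact ⟨t₀ + s, schedule_add_of_block_start ht₀ hs⟩
  intro k hk
  induction k, hk using Nat.le_induction with
  | base => exact ⟨0, rfl⟩
  | succ k hk ih =>
    obtain ⟨t₀, ht₀⟩ := ih
    have hlast := schedule_add_of_block_start ht₀ (s := k - 1) (by omega)
    have hend : ¬ position (t₀ + (k - 1)) + 1 < block (t₀ + (k - 1)) := by
      simp only [position, block, hlast]; omega
    exact ⟨t₀ + (k - 1) + 1, by rw [schedule_succ_of_not_lt hend, block, hlast]⟩

lemma tendsto_block_atTop : Tendsto block atTop atTop := by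
  refine (monotone_nat_of_le_succ block_le_block_succ).tendsto_atTop_atTop fun k => ?_
  obtain ⟨t, ht⟩ := exists_schedule_eq (Nat.lt_succ_self k)
  exact ⟨t, by simp [block, ht]⟩

end Schedule

section Kernel

def base (t : ℕ) : ℝ≥0 := 1 / 4 + (1 / 2) ^ (t + 2)

/-- Since `Real.logb 2 0 = 0`, `level (1 / 4) = -2`, and no bump sits at `1 / 4`. -/
def level (y : ℝ) : ℝ := -Real.logb 2 |y - 1 / 4| - 2

def jumpProb (t : ℕ) : ℝ := (block t : ℝ)⁻¹

def jumpRate (n : ℤ) : ℝ := if 0 ≤ n then jumpProb n.toNat else 0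

def jumpHeight (t : ℕ) : ℝ≥0 := base (t + remaining t) + (remaining t - 1 : ℕ)

def jumpWeight (y : ℝ) : ℝ := bumps jumpRate (level y)

/-- Junk where `round (level y) < 0`; `jumpWeight` vanishes there. -/
def jumpTarget (y : ℝ) : ℝ≥0 := jumpHeight (round (level y)).toNat

/-- Halves the distance to `1 / 4` below `3 / 4`, so that `base t ↦ base (t + 1)`, and moves down
by `1` above `1`. -/
def driftMap (y : ℝ) : ℝ := max (y - 1) (min (y / 2 + 1 / 8) (2 * (1 - y)))

def kernel (x : ℝ≥0) : Measure ℝ≥0 :=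
  twoPoint (jumpWeight x) (driftMap x).toNNReal (jumpTarget x)

lemma coe_base (t : ℕ) : (base t : ℝ) = 1 / 4 + (1 / 2) ^ (t + 2) := by
  simp [base]

lemma level_base (t : ℕ) : level (base t) = t := by
  rw [level, coe_base, add_sub_cancel_left, abs_of_pos (by positivity), one_div,
    Real.logb_pow, Real.logb_inv, Real.logb_self_eq_one one_lt_two]
  push_cast
  ring

lemma round_level_quarter : round (level (1 / 4)) = -2 := by
  rw [show level (1 / 4) = ((-2 : ℤ) : ℝ) by simp [level], round_intCast]

lemma abs_sub_quarter_lt_of_round_level {y : ℝ} {t : ℕ} (h : round (level y) = t) :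
    |y - 1 / 4| < (1 / 2) ^ (t + 1) := by
  have hy : y ≠ 1 / 4 := by
    rintro rfl
    rw [round_level_quarter] at h
    omega
  have hround := abs_sub_round (level y)
  rw [h, abs_le, level] at hround
  have hlog : Real.logb 2 |y - 1 / 4| < -((t + 1 : ℕ) : ℝ) := by
    push_cast at hround ⊢
    linarith [hround.2]
  rwa [Real.logb_lt_iff_lt_rpow one_lt_two (abs_pos.2 (sub_ne_zero.2 hy)),
    Real.rpow_neg zero_le_two, Real.rpow_natCast, ← inv_pow, ← one_div] at hlog

lemma continuousAt_level {y : ℝ} (hy : y ≠ 1 / 4) : ContinuousAt level y := by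
  have : |y - 1 / 4| ≠ 0 := by rwa [abs_ne_zero, sub_ne_zero]
  unfold level
  fun_prop (disch := assumption)

lemma tendsto_level_nhdsNE_quarter : Tendsto level (𝓝[≠] (1 / 4)) atTop := by
  have habs : Tendsto (fun y : ℝ => |y - 1 / 4|) (𝓝[≠] (1 / 4)) (𝓝[≠] 0) := by
    refine tendsto_nhdsWithin_iff.2 ⟨?_, ?_⟩
    · exact tendsto_nhdsWithin_of_tendsto_nhds
        ((continuous_id.sub continuous_const).abs.tendsto' (1 / 4 : ℝ) 0 (by simp))
    · filter_upwards [self_mem_nhdsWithin] with y hy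
      simpa [sub_eq_zero] using hy
  exact tendsto_atTop_add_const_right _ (-2)
    (tendsto_neg_atBot_atTop.comp ((Real.tendsto_logb_nhdsNE_zero one_lt_two).comp habs))

lemma jumpProb_pos (t : ℕ) : 0 < jumpProb t := by
  have := one_le_block t
  unfold jumpProb
  positivity

lemma jumpProb_le_one (t : ℕ) : jumpProb t ≤ 1 :=
  inv_le_one_of_one_le₀ (by exact_mod_cast one_le_block t)

lemma jumpProb_mul_block (t : ℕ) : jumpProb t * block t = 1 :=
  inv_mul_cancel₀ (Nat.cast_ne_zero.2 (by have := one_le_block t; omega))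

lemma half_pow_le_jumpProb (t : ℕ) : (1 / 2 : ℝ) ^ t ≤ jumpProb t := by
  have hk : (block t : ℝ) ≤ 2 ^ t := by
    exact_mod_cast (block_le_succ t).trans Nat.lt_two_pow_self
  rw [jumpProb, one_div, inv_pow]
  exact inv_anti₀ (by exact_mod_cast one_le_block t) hk

lemma jumpRate_nonneg (n : ℤ) : 0 ≤ jumpRate n := by
  unfold jumpRate
  split_ifs
  exacts [(jumpProb_pos _).le, le_rfl]

lemma jumpRate_le_one (n : ℤ) : jumpRate n ≤ 1 := by
  unfold jumpRate
  split_ifs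
  exacts [jumpProb_le_one _, zero_le_one]

lemma tendsto_jumpRate_atTop : Tendsto jumpRate atTop (𝓝 0) := by
  have hprob : Tendsto jumpProb atTop (𝓝 0) :=
    tendsto_inv_atTop_zero.comp ((tendsto_natCast_atTop_atTop (R := ℝ)).comp tendsto_block_atTop)
  have htoNat : Tendsto Int.toNat atTop atTop :=
    tendsto_atTop_atTop.2 fun b => ⟨b, fun n hn => by omega⟩
  refine (hprob.comp htoNat).congr' ?_
  filter_upwards [eventually_ge_atTop 0] with n hn
  simp [jumpRate, hn]

lemma jumpWeight_nonneg (y : ℝ) : 0 ≤ jumpWeight y := bumps_nonneg jumpRate_nonneg _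

lemma jumpWeight_le_one (y : ℝ) : jumpWeight y ≤ 1 :=
  (bumps_le jumpRate_nonneg _).trans (jumpRate_le_one _)

lemma jumpWeight_eq_zero_of_round_level_neg {y : ℝ} (h : round (level y) < 0) :
    jumpWeight y = 0 := by
  simp [jumpWeight, bumps, jumpRate, h.not_ge]

lemma jumpWeight_quarter : jumpWeight (1 / 4) = 0 :=
  jumpWeight_eq_zero_of_round_level_neg (by rw [round_level_quarter]; norm_num)

lemma jumpWeight_of_three_quarters_le {y : ℝ} (hy : 3 / 4 ≤ y) : jumpWeight y = 0 := by
  refine jumpWeight_eq_zero_of_round_level_neg ?_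
  have hlog : -1 ≤ Real.logb 2 |y - 1 / 4| := by
    rw [Real.le_logb_iff_rpow_le one_lt_two (by rw [abs_pos]; linarith), abs_of_pos (by linarith)]
    norm_num
    linarith
  have hround := abs_sub_round (level y)
  rw [abs_le, level] at hround
  exact_mod_cast (show (round (level y) : ℝ) < 0 by rw [level]; linarith)

lemma jumpWeight_base (t : ℕ) : jumpWeight (base t) = jumpProb t := by
  rw [jumpWeight, level_base, ← Int.cast_natCast, bumps_intCast]
  simp [jumpRate]

lemma jumpTarget_base (t : ℕ) : jumpTarget (base t) = jumpHeight t := by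
  simp [jumpTarget, level_base]

lemma exists_of_jumpWeight_ne_zero {y : ℝ} (h : jumpWeight y ≠ 0) :
    ∃ t : ℕ, jumpWeight y ≤ jumpProb t ∧ jumpTarget y = jumpHeight t ∧
      |y - 1 / 4| < (1 / 2) ^ (t + 1) := by
  have hnonneg : 0 ≤ round (level y) := by
    by_contra hneg
    exact h (jumpWeight_eq_zero_of_round_level_neg (not_le.1 hneg))
  obtain ⟨t, ht⟩ := Int.eq_ofNat_of_zero_le hnonneg
  refine ⟨t, ?_, by simp [jumpTarget, ht], abs_sub_quarter_lt_of_round_level ht⟩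
  have := bumps_le jumpRate_nonneg (level y)
  rw [ht] at this
  simpa [jumpWeight, jumpRate] using this

lemma continuous_jumpWeight : Continuous jumpWeight := by
  have hbumps := continuous_bumps (c := jumpRate) (B := 1)
    fun n => by rw [abs_of_nonneg (jumpRate_nonneg n)]; exact jumpRate_le_one n
  refine continuous_iff_continuousAt.2 fun y => ?_
  rcases eq_or_ne y (1 / 4) with rfl | hy
  · rw [← continuousWithinAt_compl_self, ContinuousWithinAt, jumpWeight_quarter]
    exact (tendsto_bumps_atTop tendsto_jumpRate_atTop).comp tendsto_level_nhdsNE_quarter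
  · exact hbumps.continuousAt.comp (continuousAt_level hy)

lemma continuousAt_jumpTarget {y : ℝ} (h : jumpWeight y ≠ 0) : ContinuousAt jumpTarget y := by
  have hy : y ≠ 1 / 4 := by rintro rfl; exact h jumpWeight_quarter
  have htent : tent (level y) ≠ 0 := fun h₀ => h (bumps_eq_zero_of_tent_eq_zero h₀)
  refine ContinuousAt.congr (f := fun _ => jumpTarget y) continuousAt_const ?_
  filter_upwards [(continuousAt_level hy).eventually
    (round_eventually_eq_of_tent_ne_zero htent)] with z hz
  simp [jumpTarget, hz]

lemma continuous_driftMap : Continuous driftMap := by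
  unfold driftMap
  fun_prop

lemma driftMap_of_one_le {y : ℝ} (hy : 1 ≤ y) : driftMap y = y - 1 :=
  max_eq_left ((min_le_right _ _).trans (by linarith))

lemma driftMap_of_le_three_quarters {y : ℝ} (hy : y ≤ 3 / 4) : driftMap y = y / 2 + 1 / 8 := by
  rw [driftMap, min_eq_left (by linarith), max_eq_right (by linarith)]

lemma driftMap_nonneg {y : ℝ} (hy : 0 ≤ y) : 0 ≤ driftMap y := by
  rcases le_or_gt 1 y with h | h
  · rw [driftMap_of_one_le h]; linarith
  · exact (le_min (by linarith) (by linarith)).trans (le_max_right _ _)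

lemma abs_driftMap_sub_le {y : ℝ} (hy : 0 ≤ y) : |driftMap y - y| ≤ 1 := by
  have h₁ : y - 1 ≤ driftMap y := le_max_left _ _
  have h₂ : driftMap y ≤ y + 1 :=
    max_le (by linarith) ((min_le_left _ _).trans (by linarith))
  rw [abs_le]
  constructor <;> linarith

lemma abs_driftMap_sub_of_near_quarter {y : ℝ} (hy : |y - 1 / 4| ≤ 1 / 2) :
    |driftMap y - y| = |y - 1 / 4| / 2 := by
  rw [driftMap_of_le_three_quarters (by linarith [abs_le.1 hy]),
    show y / 2 + 1 / 8 - y = -((y - 1 / 4) / 2) by ring, abs_neg, abs_div, abs_two]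

lemma driftMap_base (t : ℕ) : driftMap (base t) = base (t + 1) := by
  have : (1 / 2 : ℝ) ^ (t + 2) ≤ 1 / 4 := by
    calc (1 / 2 : ℝ) ^ (t + 2) ≤ (1 / 2) ^ 2 :=
          pow_le_pow_of_le_one (by norm_num) (by norm_num) (by omega)
      _ = 1 / 4 := by norm_num
  rw [driftMap_of_le_three_quarters (by rw [coe_base]; linarith), coe_base, coe_base]
  ring

lemma coe_jumpHeight (t : ℕ) :
    (jumpHeight t : ℝ) = 1 / 4 + (1 / 2) ^ (t + remaining t + 2) + ((remaining t : ℝ) - 1) := by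
  rw [jumpHeight, NNReal.coe_add, coe_base, NNReal.coe_natCast,
    Nat.cast_sub (one_le_remaining t), Nat.cast_one]

lemma abs_jumpHeight_sub_le {y : ℝ} {t : ℕ} (hy : |y - 1 / 4| < (1 / 2) ^ (t + 1)) :
    |(jumpHeight t : ℝ) - y| ≤ ((remaining t : ℝ) - 1) + 3 / 4 * (1 / 2) ^ t := by
  have hD : (1 : ℝ) ≤ remaining t := by exact_mod_cast one_le_remaining t
  have hfar : (1 / 2 : ℝ) ^ (t + remaining t + 2) ≤ (1 / 2) ^ t / 8 := by
    calc (1 / 2 : ℝ) ^ (t + remaining t + 2) ≤ (1 / 2) ^ (t + 3) :=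
          pow_le_pow_of_le_one (by norm_num) (by norm_num) (by have := one_le_remaining t; omega)
      _ = (1 / 2) ^ t / 8 := by ring
  have hpos : 0 < (1 / 2 : ℝ) ^ (t + remaining t + 2) := by positivity
  rw [pow_succ] at hy
  rw [coe_jumpHeight, abs_le]
  constructor <;> linarith [abs_lt.1 hy]

/-- Near `x_t` (block `k`, `D ≤ k` steps left, `P = 2^{-t}`) the drift moves by at most `P/4` and
the jump, of probability at most `1/k`, by at most `D - 1 + 3P/4`; the total `P + (k - 1)/k` is at
most `1` because `P ≤ 1/(t + 1) ≤ 1/k`. -/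
lemma expected_abs_increment_le_one {y : ℝ} (hy : 0 ≤ y) :
    (1 - jumpWeight y) * |driftMap y - y| + jumpWeight y * |(jumpTarget y : ℝ) - y| ≤ 1 := by
  by_cases hQ : jumpWeight y = 0
  · simpa [hQ] using abs_driftMap_sub_le hy
  obtain ⟨t, hweight, htarget, hnear⟩ := exists_of_jumpWeight_ne_zero hQ
  have hjump := abs_jumpHeight_sub_le hnear
  set P : ℝ := (1 / 2) ^ t
  have hP : P ≤ jumpProb t := half_pow_le_jumpProb t
  have hP₁ : P ≤ 1 := pow_le_one₀ (by norm_num) (by norm_num)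
  rw [pow_succ] at hnear
  have hdrift : |driftMap y - y| ≤ P / 4 := by
    rw [abs_driftMap_sub_of_near_quarter (by linarith)]
    linarith
  have hD : (remaining t : ℝ) ≤ block t := by exact_mod_cast remaining_le_block t
  have hD₁ : (1 : ℝ) ≤ remaining t := by exact_mod_cast one_le_remaining t
  have hQ₁ := jumpWeight_le_one y
  have hprob := jumpProb_mul_block t
  rw [htarget]
  calc (1 - jumpWeight y) * |driftMap y - y| + jumpWeight y * |(jumpHeight t : ℝ) - y|
      ≤ 1 * (P / 4) + jumpWeight y * (((remaining t : ℝ) - 1) + 3 / 4 * P) := by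
        have := jumpWeight_nonneg y
        gcongr
        linarith
    _ ≤ P / 4 + jumpProb t * ((block t : ℝ) - 1) + 3 / 4 * P := by
        have h₁ : jumpWeight y * ((remaining t : ℝ) - 1) ≤ jumpProb t * ((block t : ℝ) - 1) :=
          mul_le_mul hweight (by linarith) (by linarith) (jumpProb_pos t).le
        have h₂ : jumpWeight y * (3 / 4 * P) ≤ 3 / 4 * P :=
          mul_le_of_le_one_left (by positivity) hQ₁
        linarith
    _ ≤ 1 := by linarith

end Kernel

section Chain

lemma isProbabilityMeasure_kernel (x : ℝ≥0) : IsProbabilityMeasure (kernel x) :=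
  isProbabilityMeasure_twoPoint (jumpWeight_nonneg _) (jumpWeight_le_one _) _ _

lemma kernel_base (t : ℕ) :
    kernel (base t) = twoPoint (jumpProb t) (base (t + 1)) (jumpHeight t) := by
  rw [kernel, jumpWeight_base, driftMap_base, Real.toNNReal_coe, jumpTarget_base]

lemma kernel_of_one_lt {x : ℝ≥0} (hx : 1 < (x : ℝ)) :
    kernel x = Measure.dirac ((x : ℝ) - 1).toNNReal := by
  rw [kernel, jumpWeight_of_three_quarters_le (by linarith), driftMap_of_one_le hx.le,
    twoPoint_zero]

lemma continuous_integral_kernel (g : BoundedContinuousFunction ℝ≥0 ℝ) :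
    Continuous fun x => ∫ y, g y ∂kernel x :=
  continuous_integral_twoPoint (fun _ => jumpWeight_nonneg _) (fun _ => jumpWeight_le_one _)
    (continuous_jumpWeight.comp NNReal.continuous_coe)
    (continuous_real_toNNReal.comp (continuous_driftMap.comp NNReal.continuous_coe))
    (fun _ => (em _).imp_right fun h =>
      (continuousAt_jumpTarget h).comp NNReal.continuous_coe.continuousAt) g

lemma lintegral_abs_increment_kernel_le_one (x : ℝ≥0) :
    ∫⁻ y, ENNReal.ofReal |(y : ℝ) - x| ∂kernel x ≤ 1 := by
  have h₀ := jumpWeight_nonneg x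
  have h₁ : 0 ≤ 1 - jumpWeight x := by linarith [jumpWeight_le_one x]
  rw [kernel, lintegral_twoPoint, Real.coe_toNNReal _ (driftMap_nonneg x.coe_nonneg),
    ← ENNReal.ofReal_mul h₁, ← ENNReal.ofReal_mul h₀,
    ← ENNReal.ofReal_add (by positivity) (by positivity), ← ENNReal.ofReal_one]
  exact ENNReal.ofReal_le_ofReal (expected_abs_increment_le_one x.coe_nonneg)

lemma integral_increment_kernel {x : ℝ≥0} (hx : 1 < (x : ℝ)) :
    ∫ y, ((y : ℝ) - x) ∂kernel x = -1 := by
  rw [kernel_of_one_lt hx, integral_dirac, Real.coe_toNNReal _ (by linarith)]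
  ring

/-- The point carrying all the mass that has jumped during the current block. -/
def escapedPoint (t : ℕ) : ℝ≥0 := base (t + remaining t) + remaining t

def escapedMass (t : ℕ) : ℝ := 1 - (1 - jumpProb t) ^ position t

lemma coe_escapedPoint (t : ℕ) :
    (escapedPoint t : ℝ) = 1 / 4 + (1 / 2) ^ (t + remaining t + 2) + remaining t := by
  rw [escapedPoint, NNReal.coe_add, coe_base, NNReal.coe_natCast]

lemma remaining_lt_escapedPoint (t : ℕ) : (remaining t : ℝ) < escapedPoint t := by
  rw [coe_escapedPoint]
  have : (0 : ℝ) < (1 / 2) ^ (t + remaining t + 2) := by positivity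
  linarith

lemma kernel_escapedPoint (t : ℕ) : kernel (escapedPoint t) = Measure.dirac (jumpHeight t) := by
  have hD : (1 : ℝ) ≤ remaining t := by exact_mod_cast one_le_remaining t
  rw [kernel_of_one_lt (by linarith [remaining_lt_escapedPoint t]),
    show (escapedPoint t : ℝ) - 1 = jumpHeight t by rw [coe_escapedPoint, coe_jumpHeight]; ring,
    Real.toNNReal_coe]

lemma escapedMass_nonneg (t : ℕ) : 0 ≤ escapedMass t := by
  have := jumpProb_pos t
  exact sub_nonneg.2 (pow_le_one₀ (by linarith [jumpProb_le_one t]) (by linarith))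

lemma escapedMass_le_one (t : ℕ) : escapedMass t ≤ 1 := by
  have := jumpProb_le_one t
  exact sub_le_self _ (pow_nonneg (by linarith) _)

lemma iterKernel_kernel_base_zero (t : ℕ) :
    iterKernel kernel (base 0) t = twoPoint (escapedMass t) (base t) (escapedPoint t) := by
  induction t with
  | zero => simp [iterKernel, escapedMass, position, schedule]
  | succ t ih =>
    rw [iterKernel, ih, bind_twoPoint_eq_twoPoint (escapedMass_nonneg t) (escapedMass_le_one t)
      (jumpProb_pos t).le (kernel_base t) (kernel_escapedPoint t)]
    by_cases h : position t + 1 < block t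
    · have hs := schedule_succ_of_lt h
      have hD : remaining (t + 1) + 1 = remaining t := by
        simp only [remaining, block, position, hs] at h ⊢; omega
      congr 1
      · simp only [escapedMass, jumpProb, block, position, hs]
        ring
      · rw [jumpHeight, escapedPoint, ← hD, Nat.add_sub_cancel]
        congr 2
        omega
    · have hs := schedule_succ_of_not_lt h
      have hD : remaining t = 1 := by
        have := position_lt_block t
        simp only [remaining]; omega
      have hmass : escapedMass (t + 1) = 0 := by simp [escapedMass, position, hs]
      have hp₀ := escapedMass_nonneg t
      have hp₁ := escapedMass_le_one t
      have hq₀ := jumpProb_pos t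
      have hq₁ := jumpProb_le_one t
      rw [hmass, twoPoint_zero, jumpHeight, hD, Nat.sub_self, Nat.cast_zero, add_zero,
        twoPoint_self (by nlinarith) (by nlinarith)]

lemma half_le_escapedMass {t D : ℕ} (hD : 1 ≤ D) (ht : schedule t = (4 * D, 3 * D)) :
    1 / 2 ≤ escapedMass t := by
  have hq : jumpProb t = 3 / 4 / ((3 * D : ℕ) : ℝ) := by
    simp only [jumpProb, block, ht]
    push_cast
    field_simp
  have hexp : (1 - jumpProb t) ^ (3 * D) ≤ Real.exp (-(3 / 4)) := by
    have : (1 : ℝ) ≤ D := by exact_mod_cast hD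
    rw [hq]
    exact Real.one_sub_div_pow_le_exp_neg (by push_cast; linarith)
  have hlog : Real.exp (-(3 / 4)) ≤ 1 / 2 := by
    rw [show (1 / 2 : ℝ) = Real.exp (-Real.log 2) by
      rw [Real.exp_neg, Real.exp_log two_pos, one_div]]
    exact Real.exp_le_exp.2 (by linarith [Real.log_two_lt_d9])
  simp only [escapedMass, position, ht]
  linarith

theorem escape_of_mass {R : ℝ} (hR : 0 < R) :
    ∃ n, (1 : ℝ≥0∞) / 2 ≤ iterKernel kernel (base 0) n {y | R < (y : ℝ)} := by
  set D := ⌈R⌉₊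
  have hD : 1 ≤ D := Nat.one_le_ceil_iff.2 hR
  obtain ⟨t, ht⟩ := exists_schedule_eq (show 3 * D < 4 * D by omega)
  have hremaining : remaining t = D := by simp only [remaining, block, position, ht]; omega
  refine ⟨t, ?_⟩
  rw [iterKernel_kernel_base_zero, show (1 : ℝ≥0∞) / 2 = ENNReal.ofReal (1 / 2) by
    rw [one_div, one_div, ENNReal.ofReal_inv_of_pos two_pos, ENNReal.ofReal_ofNat]]
  refine (ENNReal.ofReal_le_ofReal (half_le_escapedMass hD ht)).trans
    (ofReal_le_twoPoint_apply _ _ ?_)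
  have := remaining_lt_escapedPoint t
  rw [hremaining] at this
  exact (Nat.le_ceil R).trans_lt this

end Chain

end

end EscapeOfMass

/-- Escape of mass under (D) and (M₀): there is a Markov chain on `Ω = [0,∞)` with
(weakly) continuous transition kernel whose increments are uniformly bounded in `L¹`
(by 1) and with drift exactly `−1` above level 1, yet for some starting point `x₀`
the mass escapes: for every `R` some `n`-step distribution gives mass `≥ 1/2`
to `(R, ∞)`. -/
theorem stmt14 :
    ∃ μk : ℝ≥0 → Measure ℝ≥0,
      (∀ x, IsProbabilityMeasure (μk x)) ∧
      (∀ g : BoundedContinuousFunction ℝ≥0 ℝ,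
        Continuous fun x => ∫ y, g y ∂ μk x) ∧
      (∀ x, ∫⁻ y, ENNReal.ofReal |(y : ℝ) - (x : ℝ)| ∂ μk x ≤ 1) ∧
      (∀ x : ℝ≥0, 1 < (x : ℝ) → ∫ y, ((y : ℝ) - (x : ℝ)) ∂ μk x = -1) ∧
      ∃ x₀ : ℝ≥0, ∀ R : ℝ, 0 < R → ∃ n : ℕ,
        (1 : ℝ≥0∞) / 2 ≤ iterKernel μk x₀ n {y | R < (y : ℝ)} :=
  ⟨EscapeOfMass.kernel, EscapeOfMass.isProbabilityMeasure_kernel,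
    EscapeOfMass.continuous_integral_kernel, EscapeOfMass.lintegral_abs_increment_kernel_le_one,
    fun _ => EscapeOfMass.integral_increment_kernel, EscapeOfMass.base 0,
    fun _ => EscapeOfMass.escape_of_mass⟩
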